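/- arXiv:2304.07884 — 2 statements merged into one kernel-verified Lean document; each statement's English description precedes it below -/
import Mathlib

section
/- Theorem 1 (LRB decay identity): for every linear map Λ on 3^n × 3^n complex matrices, all 3^n × 3^n complex matrices M and ρ, and every integer m ≥ 1: tr(M · (P̄ ∘ Λ)^m(ρ)) = ∑_{b, b' ∈ {c,l}^n} tr(Π̃_b M) · ((Q_Λ)^{m−1})_{b,b'} · tr(Π_{b'} Λ(ρ)). -/
open Matrix

noncomputable section

/-- The projector Π_b associated with a leakage pattern `b : Fin n → Bool`
(`b j = true` meaning that qubit `j` is leaked, i.e. its index equals 2). -/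
def leakProj {n : ℕ} (b : Fin n → Bool) :
    Matrix (Fin n → Fin 3) (Fin n → Fin 3) ℂ :=
  Matrix.diagonal fun k => if ∀ j, (k j = (2 : Fin 3) ↔ b j = true) then 1 else 0

/-- The rank of Π_b, namely 2^{#{j : b j = c}}. -/
def leakProjRank {n : ℕ} (b : Fin n → Bool) : ℕ :=
  2 ^ (Finset.univ.filter fun j => b j = false).card

/-- The normalized projector Π̃_b = Π_b / rank(Π_b). -/
def leakProjN {n : ℕ} (b : Fin n → Bool) :
    Matrix (Fin n → Fin 3) (Fin n → Fin 3) ℂ :=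
  (leakProjRank b : ℂ)⁻¹ • leakProj b

/-- The twirling projector P̄(ρ) = ∑_b tr(Π_b ρ) Π̃_b. -/
def twirlProj {n : ℕ} (ρ : Matrix (Fin n → Fin 3) (Fin n → Fin 3) ℂ) :
    Matrix (Fin n → Fin 3) (Fin n → Fin 3) ℂ :=
  ∑ b : Fin n → Bool, Matrix.trace (leakProj b * ρ) • leakProjN b

/-- The condensed-operator matrix Q_Λ of a map Λ on 3^n × 3^n matrices:
(Q_Λ)_{b,b'} = tr(Π_b Λ(Π̃_{b'})). -/
def condensedMat {n : ℕ}
    (Λ : Matrix (Fin n → Fin 3) (Fin n → Fin 3) ℂ →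
      Matrix (Fin n → Fin 3) (Fin n → Fin 3) ℂ) :
    Matrix (Fin n → Bool) (Fin n → Bool) ℂ :=
  Matrix.of fun b b' => Matrix.trace (leakProj b * Λ (leakProjN b'))

lemma trace_mul_twirl {n : ℕ} (A ρ : Matrix (Fin n → Fin 3) (Fin n → Fin 3) ℂ) :
    Matrix.trace (A * twirlProj ρ) =
      ∑ b : Fin n → Bool, Matrix.trace (leakProj b * ρ) * Matrix.trace (leakProjN b * A) := by
  simp only [twirlProj, Matrix.mul_sum, Matrix.trace_sum, Matrix.mul_smul, Matrix.trace_smul,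
    smul_eq_mul]
  exact Finset.sum_congr rfl fun b _ => by rw [Matrix.trace_mul_comm A (leakProjN b)]

lemma keyB {n : ℕ}
    (Λ : Matrix (Fin n → Fin 3) (Fin n → Fin 3) ℂ →ₗ[ℂ]
      Matrix (Fin n → Fin 3) (Fin n → Fin 3) ℂ)
    (ρ : Matrix (Fin n → Fin 3) (Fin n → Fin 3) ℂ) (k : ℕ) (b : Fin n → Bool) :
    Matrix.trace (leakProj b * Λ ((fun σ => twirlProj (Λ σ))^[k] ρ)) =
      ∑ b' : Fin n → Bool, ((condensedMat (fun σ => Λ σ)) ^ k) b b' *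
        Matrix.trace (leakProj b' * Λ ρ) := by
  induction k generalizing b with
  | zero => simp [Matrix.one_apply]
  | succ k ih =>
    rw [Function.iterate_succ_apply']
    have : ((fun σ => twirlProj (Λ σ))^[k] ρ) = (fun σ => twirlProj (Λ σ))^[k] ρ := rfl
    show Matrix.trace (leakProj b * Λ (twirlProj (Λ ((fun σ => twirlProj (Λ σ))^[k] ρ)))) = _
    rw [twirlProj, map_sum]
    simp only [_root_.map_smul, Matrix.mul_sum, Matrix.mul_smul, Matrix.trace_sum,
      Matrix.trace_smul, smul_eq_mul]
    have hQ : ∀ c, Matrix.trace (leakProj b * Λ (leakProjN c)) =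
        (condensedMat (fun σ => Λ σ)) b c := fun c => rfl
    calc ∑ c : Fin n → Bool,
          Matrix.trace (leakProj c * Λ ((fun σ => twirlProj (Λ σ))^[k] ρ)) *
            Matrix.trace (leakProj b * Λ (leakProjN c))
        = ∑ c : Fin n → Bool, ∑ b' : Fin n → Bool,
            (condensedMat (fun σ => Λ σ)) b c *
              ((condensedMat (fun σ => Λ σ)) ^ k) c b' *
              Matrix.trace (leakProj b' * Λ ρ) := by
          refine Finset.sum_congr rfl fun c _ => ?_
          rw [ih, hQ, Finset.sum_mul]
          refine Finset.sum_congr rfl fun b' _ => by ring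
      _ = _ := by
          rw [Finset.sum_comm]
          refine Finset.sum_congr rfl fun b' _ => ?_
          rw [pow_succ', Matrix.mul_apply, Finset.sum_mul]

/-- Theorem 1 (LRB decay identity): for every linear map Λ, all matrices M, ρ and
every m ≥ 1, tr(M · (P̄ ∘ Λ)^m(ρ)) = ∑_{b,b'} tr(Π̃_b M) ((Q_Λ)^{m−1})_{b,b'}
tr(Π_{b'} Λ(ρ)). -/
theorem lrb_decay (n : ℕ)
    (Λ : Matrix (Fin n → Fin 3) (Fin n → Fin 3) ℂ →ₗ[ℂ]
      Matrix (Fin n → Fin 3) (Fin n → Fin 3) ℂ)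
    (M ρ : Matrix (Fin n → Fin 3) (Fin n → Fin 3) ℂ)
    (m : ℕ) (hm : 1 ≤ m) :
    Matrix.trace (M * (fun σ => twirlProj (Λ σ))^[m] ρ) =
      ∑ b : Fin n → Bool, ∑ b' : Fin n → Bool,
        Matrix.trace (leakProjN b * M) *
          ((condensedMat (fun σ => Λ σ)) ^ (m - 1)) b b' *
          Matrix.trace (leakProj b' * Λ ρ) := by
  obtain ⟨k, rfl⟩ := Nat.exists_eq_add_of_le hm
  rw [add_comm 1 k, Function.iterate_succ_apply']
  show Matrix.trace (M * twirlProj (Λ ((fun σ => twirlProj (Λ σ))^[k] ρ))) = _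
  rw [trace_mul_twirl]
  simp only [Nat.add_sub_cancel]
  refine Finset.sum_congr rfl fun b _ => ?_
  rw [keyB, Finset.sum_mul]
  refine Finset.sum_congr rfl fun b' _ => by ring
end
end

section
/- Appendix F (eigenstructure and single-exponential decay for the interleaved-LRB transition matrix): let n ≥ 1 and ε, p̄ be reals, and let Q be the interleaved-LRB transition matrix with parameters B, C. Then: (i) Q w = w for w = (2, 1, 1, …, 1); (ii) Q v = (1 − (n+2)B) v for v = (−n, 1, 1, …, 1); (iii) Q u = (1 − 2B − nC) u for every vector u = (u_0, u_1, …, u_n) with u_0 = 0 and ∑_{i=1}^n u_i = 0; (iv) for every integer m ≥ 0, Q^m e_0 = (1/(n+2)) · (w − (1 − (n+2)B)^m · v), where e_0 = (1, 0, …, 0). In particular every entry of Q^m e_0 has the form A + B'·(1 − (n+2)B)^m with A, B' independent of m. -/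
open Matrix Finset

noncomputable section

/-- The (n+1)×(n+1) interleaved-LRB transition matrix with parameters B and C:
Q₀₀ = 1 − nB, Q₀ᵢ = 2B, Qᵢ₀ = B, Qᵢⱼ = C for distinct i, j ≥ 1, and
Qᵢᵢ = 1 − 2B − (n−1)C. -/
def Qil (n : ℕ) (B C : ℝ) : Matrix (Fin (n + 1)) (Fin (n + 1)) ℝ :=
  Matrix.of fun a b =>
    Fin.cases (motive := fun _ => ℝ)
      (Fin.cases (motive := fun _ => ℝ) (1 - (n : ℝ) * B) (fun _ => 2 * B) b)
      (fun i =>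
        Fin.cases (motive := fun _ => ℝ) B
          (fun j => if i = j then 1 - 2 * B - ((n : ℝ) - 1) * C else C) b)
      a

/-- B := ε + p̄ − (n+1)·2ⁿ·p̄·ε. -/
def Bil (n : ℕ) (ε pbar : ℝ) : ℝ := ε + pbar - ((n : ℝ) + 1) * 2 ^ n * pbar * ε

/-- C := 2^{n+1}·p̄·ε. -/
def Cil (n : ℕ) (ε pbar : ℝ) : ℝ := 2 ^ (n + 1) * pbar * ε

/-- The vector w = (2, 1, 1, …, 1). -/
def wVec (n : ℕ) : Fin (n + 1) → ℝ := Fin.cons 2 fun _ => 1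

/-- The vector v = (−n, 1, 1, …, 1). -/
def vVec (n : ℕ) : Fin (n + 1) → ℝ := Fin.cons (-(n : ℝ)) fun _ => 1

/-- The vector e₀ = (1, 0, …, 0). -/
def e0Vec (n : ℕ) : Fin (n + 1) → ℝ := Fin.cons 1 fun _ => 0

lemma sum_ite_mul' (n : ℕ) (i : Fin n) (D C : ℝ) (u : Fin n → ℝ) :
    ∑ j, (if i = j then D * u j else C * u j) = (D - C) * u i + C * ∑ j, u j := by
  have h : ∀ j, (if i = j then D * u j else C * u j)
      = (if i = j then (D - C) * u j else 0) + C * u j := by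
    intro j; split <;> ring
  simp only [h, Finset.sum_add_distrib, Finset.sum_ite_eq, Finset.mem_univ, if_true,
    ← Finset.mul_sum]

lemma qil_mulVec (n : ℕ) (B C : ℝ) (u : Fin (n + 1) → ℝ) :
    (Qil n B C).mulVec u = Fin.cons
      ((1 - (n : ℝ) * B) * u 0 + 2 * B * ∑ j : Fin n, u j.succ)
      (fun i => B * u 0 + ((1 - 2 * B - ((n:ℝ) - 1) * C) - C) * u i.succ
        + C * ∑ j : Fin n, u j.succ) := by
  funext a
  refine Fin.cases ?_ ?_ a
  · simp [mulVec, dotProduct, Qil, Fin.sum_univ_succ, Finset.mul_sum]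
  · intro i
    simp [mulVec, dotProduct, Qil, Fin.sum_univ_succ, sum_ite_mul']; ring

lemma qil_w (n : ℕ) (B C : ℝ) : (Qil n B C).mulVec (wVec n) = wVec n := by
  rw [qil_mulVec]
  funext a
  refine Fin.cases ?_ (fun i => ?_) a <;> simp [wVec] <;> ring

lemma qil_v (n : ℕ) (B C : ℝ) :
    (Qil n B C).mulVec (vVec n) = (1 - ((n : ℝ) + 2) * B) • vVec n := by
  rw [qil_mulVec]
  funext a
  refine Fin.cases ?_ (fun i => ?_) a <;> simp [vVec] <;> ring

lemma qil_u (n : ℕ) (B C : ℝ) (u : Fin (n + 1) → ℝ) (h0 : u 0 = 0)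
    (hs : (∑ i : Fin n, u i.succ) = 0) :
    (Qil n B C).mulVec u = (1 - 2 * B - (n : ℝ) * C) • u := by
  rw [qil_mulVec]
  funext a
  refine Fin.cases ?_ (fun i => ?_) a <;>
    simp only [Fin.cons_zero, Fin.cons_succ, h0, hs, Pi.smul_apply, smul_eq_mul] <;> ring

/-- Appendix F (eigenstructure and single-exponential decay for the
interleaved-LRB transition matrix). -/
theorem ilrb_eigenstructure (n : ℕ) (hn : 1 ≤ n) (ε pbar : ℝ) :
    (Qil n (Bil n ε pbar) (Cil n ε pbar)).mulVec (wVec n) = wVec n ∧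
      (Qil n (Bil n ε pbar) (Cil n ε pbar)).mulVec (vVec n) =
        (1 - ((n : ℝ) + 2) * Bil n ε pbar) • vVec n ∧
      (∀ u : Fin (n + 1) → ℝ, u 0 = 0 → (∑ i : Fin n, u i.succ) = 0 →
        (Qil n (Bil n ε pbar) (Cil n ε pbar)).mulVec u =
          (1 - 2 * Bil n ε pbar - (n : ℝ) * Cil n ε pbar) • u) ∧
      (∀ m : ℕ,
        ((Qil n (Bil n ε pbar) (Cil n ε pbar)) ^ m).mulVec (e0Vec n) =
          (1 / ((n : ℝ) + 2)) •
            (wVec n - ((1 - ((n : ℝ) + 2) * Bil n ε pbar) ^ m) • vVec n)) ∧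
      (∀ k : Fin (n + 1), ∃ A B' : ℝ, ∀ m : ℕ,
        ((Qil n (Bil n ε pbar) (Cil n ε pbar)) ^ m).mulVec (e0Vec n) k =
          A + B' * (1 - ((n : ℝ) + 2) * Bil n ε pbar) ^ m) := by
  set B := Bil n ε pbar
  set C := Cil n ε pbar
  set Q := Qil n B C
  set lam := 1 - ((n : ℝ) + 2) * B with hlam
  have hn2 : ((n : ℝ) + 2) ≠ 0 := by positivity
  have he0 : e0Vec n = (1 / ((n : ℝ) + 2)) • (wVec n - vVec n) := by
    funext a
    refine Fin.cases ?_ (fun i => ?_) a <;>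
      simp [e0Vec, wVec, vVec] <;> field_simp <;> ring
  have hiv : ∀ m : ℕ, (Q ^ m).mulVec (e0Vec n) =
      (1 / ((n : ℝ) + 2)) • (wVec n - (lam ^ m) • vVec n) := by
    intro m
    induction m with
    | zero => simpa using he0
    | succ m ih =>
        rw [pow_succ', ← Matrix.mulVec_mulVec, ih, Matrix.mulVec_smul,
          Matrix.mulVec_sub, qil_w, Matrix.mulVec_smul, qil_v, smul_smul,
          mul_comm (lam ^ m) lam, ← pow_succ']
  refine ⟨qil_w n B C, qil_v n B C, fun u h0 hs => qil_u n B C u h0 hs, hiv, ?_⟩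
  intro k
  refine ⟨wVec n k / ((n : ℝ) + 2), -(vVec n k) / ((n : ℝ) + 2), fun m => ?_⟩
  rw [hiv m]
  simp [Pi.smul_apply, Pi.sub_apply]
  ring
end
end
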